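/- Let f : ℝⁿ → ℝ be convex and differentiable with minimizer X⋆, and let X : [0,∞) → ℝⁿ satisfy the gradient flow Ẋ(t) = −∇f(X(t)) with X(0) = X₀. Then for all t > 0, f(X(t)) − f⋆ ≤ ‖X₀ − X⋆‖²/(2t). -/

import Mathlib

/-!
Along the flow, the energy `E(s) = s (f(X s) - f⋆) + ‖X s - X⋆‖² / 2` has derivative
`f(X) - f⋆ - s ‖∇f(X)‖² - ⟪∇f(X), X - X⋆⟫`, which is nonpositive by the first-order convexity
inequality at `X⋆`. Hence `t (f(X t) - f⋆) ≤ E(t) ≤ E(0) = ‖X₀ - X⋆‖² / 2`.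
-/

open scoped RealInnerProductSpace

section GradientFlow

variable {E : Type*} [NormedAddCommGroup E]

noncomputable def flowEnergy (f : E → ℝ) (X : ℝ → E) (xs : E) (s : ℝ) : ℝ :=
  s * (f (X s) - f xs) + ‖X s - xs‖ ^ 2 / 2

theorem mul_sub_le_flowEnergy (f : E → ℝ) (X : ℝ → E) (xs : E) (s : ℝ) :
    s * (f (X s) - f xs) ≤ flowEnergy f X xs s :=
  le_add_of_nonneg_right (by positivity)

variable [InnerProductSpace ℝ E] {f : E → ℝ} {g : E → E} {X : ℝ → E} {xs : E}

theorem flowEnergy_deriv_nonpos {s : ℝ} (hs : 0 ≤ s)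
    (hconv : 0 ≤ f xs - f (X s) - ⟪g (X s), xs - X s⟫) :
    f (X s) - f xs - s * ‖g (X s)‖ ^ 2 - ⟪g (X s), X s - xs⟫ ≤ 0 := by
  have hflip : ⟪g (X s), xs - X s⟫ = -⟪g (X s), X s - xs⟫ := by
    rw [← inner_neg_right, neg_sub]
  rw [hflip] at hconv
  nlinarith [mul_nonneg hs (sq_nonneg ‖g (X s)‖)]

variable [CompleteSpace E]

theorem HasGradientAt.comp_hasDerivAt {γ : ℝ → E} {v w : E} {s : ℝ}
    (hf : HasGradientAt f v (γ s)) (hγ : HasDerivAt γ w s) :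
    HasDerivAt (fun u => f (γ u)) ⟪v, w⟫ s :=
  (hf.hasFDerivAt.comp_hasDerivAt s hγ : HasDerivAt (fun u => f (γ u)) _ s).congr_deriv (by simp)

theorem hasDerivAt_flowEnergy {s : ℝ} (hgrad : HasGradientAt f (g (X s)) (X s))
    (hX : HasDerivAt X (-g (X s)) s) :
    HasDerivAt (flowEnergy f X xs)
      (f (X s) - f xs - s * ‖g (X s)‖ ^ 2 - ⟪g (X s), X s - xs⟫) s := by
  have hfX := hgrad.comp_hasDerivAt hX
  have hdist := (hX.sub_const xs).norm_sq
  have h : HasDerivAt (fun u => u * (f (X u) - f xs) + ‖X u - xs‖ ^ 2 / 2)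
      (1 * (f (X s) - f xs) + s * ⟪g (X s), -g (X s)⟫ + 2 * ⟪X s - xs, -g (X s)⟫ / 2) s :=
    ((hasDerivAt_id' s).mul (hfX.sub_const (f xs))).add (hdist.div_const 2)
  refine h.congr_deriv ?_
  simp only [inner_neg_right, real_inner_self_eq_norm_sq, real_inner_comm (g (X s))]
  ring

theorem antitoneOn_flowEnergy (hgrad : ∀ x, HasGradientAt f (g x) x)
    (hconv : ∀ y, 0 ≤ f xs - f y - ⟪g y, xs - y⟫)
    (hX : ∀ s ∈ Set.Ici (0 : ℝ), HasDerivAt X (-g (X s)) s) :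
    AntitoneOn (flowEnergy f X xs) (Set.Ici 0) := by
  have hE (s : ℝ) (hs : 0 ≤ s) := hasDerivAt_flowEnergy (xs := xs) (hgrad (X s)) (hX s hs)
  exact antitoneOn_of_hasDerivWithinAt_nonpos (convex_Ici 0)
    (fun s hs => (hE s hs).continuousAt.continuousWithinAt)
    (fun s hs => (hE s (interior_subset hs)).hasDerivWithinAt)
    (fun s hs => flowEnergy_deriv_nonpos (interior_subset hs) (hconv (X s)))

end GradientFlow

theorem gradient_flow_rate_general
    {E : Type*} [NormedAddCommGroup E] [InnerProductSpace ℝ E] [CompleteSpace E]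
    (f : E → ℝ) (g : E → E)
    (hgrad : ∀ x, HasGradientAt f (g x) x)
    (hconv : ∀ x y, 0 ≤ f x - f y - ⟪g y, x - y⟫)
    (X : ℝ → E)
    (hX' : ∀ t ∈ Set.Ici (0:ℝ), HasDerivAt X (-(g (X t))) t)
    (X₀ : E) (hX0 : X 0 = X₀)
    (Xs : E) :
    ∀ t > (0:ℝ), f (X t) - f Xs ≤ ‖X₀ - Xs‖ ^ 2 / (2 * t) := by
  intro t ht
  have hdecay : flowEnergy f X Xs t ≤ flowEnergy f X Xs 0 :=
    antitoneOn_flowEnergy hgrad (hconv Xs) hX' Set.self_mem_Ici (Set.mem_Ici.2 ht.le) ht.le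
  have hinit : flowEnergy f X Xs 0 = ‖X₀ - Xs‖ ^ 2 / 2 := by simp [flowEnergy, hX0]
  rw [le_div_iff₀ (by positivity)]
  linarith [mul_sub_le_flowEnergy f X Xs t]

theorem gradient_flow_rate
    {E : Type*} [NormedAddCommGroup E] [InnerProductSpace ℝ E] [CompleteSpace E]
    (f : E → ℝ) (g : E → E)
    (hgrad : ∀ x, HasGradientAt f (g x) x)
    (hconv : ∀ x y, 0 ≤ f x - f y - ⟪g y, x - y⟫)
    (X : ℝ → E)
    (hX' : ∀ t ∈ Set.Ici (0:ℝ), HasDerivAt X (-(g (X t))) t)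
    (X₀ : E) (hX0 : X 0 = X₀)
    (Xs : E) (hmin : ∀ x, f Xs ≤ f x) :
    ∀ t > (0:ℝ), f (X t) - f Xs ≤ ‖X₀ - Xs‖ ^ 2 / (2 * t) :=
  gradient_flow_rate_general f g hgrad hconv X hX' X₀ hX0 Xs
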